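/- arXiv:1905.06584 — 5 statements merged into one kernel-verified Lean document; each statement's English description precedes it below -/
import Mathlib

section
/- Let p ∈ ℕ, x₀ > 0, R > 0, and let W be either the weight W_{[-R,R]} or W = cosh(·/R). With the constant weight w = 1 in the first variable, the bounded operator 𝒦 : L²(1⊗W^{⊗p}) → L²(ℝ×[-1,1]^p), 𝒦f(t,u) = 𝓕[f](t, x₀ t u)·(x₀|t|)^{p/2}, is not a compact operator. -/
/-! The indicators of the translated cubes `[n-R, n+R] × [-R, R]^p` form a bounded sequence in
`L²(1 ⊗ W^{⊗p})`, since the weight does not see the first variable. Translating by `n` in the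
first variable multiplies the Fourier transform by `e^{itn}`, so their images under `K` are
`e^{itn} h` for one fixed function `h`, which does not vanish for small `t > 0`. These images all
have the same nonzero norm, yet by the Riemann–Lebesgue lemma they tend weakly to `0`; a compact
operator would give a norm-convergent subsequence, whose limit is then both `0` and of that
nonzero norm. -/

open MeasureTheory Set
open scoped ENNReal

/-- The Fourier transform on `ℝ^{1+p} ≅ ℝ × (Fin p → ℝ)` with the paper's convention
`𝓕[f](t,v) = ∫ e^{i(t a + v·b)} f(a,b) da db`. -/
noncomputable def paperFourier (p : ℕ) (f : ℝ × (Fin p → ℝ) → ℂ) (t : ℝ) (v : Fin p → ℝ) : ℂ :=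
  ∫ q : ℝ × (Fin p → ℝ), Complex.exp (Complex.I * ((t * q.1 + ∑ j, v j * q.2 j : ℝ) : ℂ)) * f q

/-- The weight `W_{[-R,R]}`, equal to `1` on `[-R,R]` and `+∞` outside. -/
noncomputable def boxWeight (R : ℝ) : ℝ → ℝ≥0∞ := fun b => if |b| ≤ R then 1 else ⊤

/-- The weight `cosh (·/R)`. -/
noncomputable def coshWeight (R : ℝ) : ℝ → ℝ≥0∞ := fun b => ENNReal.ofReal (Real.cosh (b / R))

open Filter Topology Complex ComplexConjugate

lemma not_isCompactOperator_of_weakly_null {𝕜 E F : Type*} [RCLike 𝕜] [NormedAddCommGroup E]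
    [NormedSpace 𝕜 E] [NormedAddCommGroup F] [InnerProductSpace 𝕜 F] (K : E →L[𝕜] F)
    {x : ℕ → E} (hx : Bornology.IsBounded (range x))
    (hweak : ∀ y, Tendsto (fun n => inner 𝕜 y (K (x n))) atTop (𝓝 0))
    {c : ℝ} (hc : 0 < c) (hnorm : ∀ n, c ≤ ‖K (x n)‖) :
    ¬ IsCompactOperator K := fun hK => by
  obtain ⟨y, -, φ, hφ, hlim⟩ := (hK.isCompact_closure_image_of_bounded (f := K.toLinearMap) hx
    ).tendsto_subseq fun n => subset_closure ⟨x n, mem_range_self n, rfl⟩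
  have hy : y = 0 := inner_self_eq_zero.1 <|
    tendsto_nhds_unique (tendsto_const_nhds.inner hlim) ((hweak y).comp hφ.tendsto_atTop)
  have := ge_of_tendsto' (hy ▸ hlim.norm) fun k => hnorm (φ k)
  linarith [norm_zero (E := F)]

lemma tendsto_integral_exp_mul_natCast (g : ℝ → ℂ) :
    Tendsto (fun n : ℕ => ∫ t, exp (I * (t * n : ℝ)) * g t) atTop (𝓝 0) := by
  have hscale : Tendsto (fun n : ℕ => -((n : ℝ) / (2 * Real.pi))) atTop (cocompact ℝ) :=
    (tendsto_neg_atTop_atBot.comp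
      (tendsto_natCast_atTop_atTop.atTop_div_const Real.two_pi_pos)).mono_right
      (by rw [cocompact_eq_atBot_atTop]; exact le_sup_left)
  refine ((Real.tendsto_integral_exp_smul_cocompact g).comp hscale).congr fun n => ?_
  refine integral_congr_ae (.of_forall fun t => ?_)
  dsimp only
  rw [Circle.smul_def, Real.fourierChar_apply, smul_eq_mul, mul_comm I]
  congr 3
  field_simp

lemma tendsto_integral_prod_exp_mul_natCast {Y : Type*} [MeasurableSpace Y] {ν : Measure Y}
    [SFinite ν] {F : ℝ × Y → ℂ} (hF : Integrable F (volume.prod ν)) :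
    Tendsto (fun n : ℕ => ∫ q, exp (I * (q.1 * n : ℝ)) * F q ∂(volume.prod ν)) atTop (𝓝 0) := by
  refine (tendsto_integral_exp_mul_natCast fun t => ∫ u, F (t, u) ∂ν).congr fun n => ?_
  have hint : Integrable (fun q : ℝ × Y => exp (I * (q.1 * n : ℝ)) * F q) (volume.prod ν) :=
    hF.bdd_mul (c := 1) (by fun_prop) (.of_forall fun q => by
      rw [mul_comm, norm_exp_ofReal_mul_I])
  rw [integral_prod _ hint]
  simp only [integral_const_mul]

section Modulation

variable {Y : Type*} [MeasurableSpace Y] {μ : Measure (ℝ × Y)} {g : ℕ → Lp ℂ 2 μ} {h : ℝ × Y → ℂ}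

lemma norm_eq_of_coeFn_eq_exp_mul (hg : ∀ n : ℕ, g n =ᵐ[μ] fun q => exp (I * (q.1 * n : ℝ)) * h q)
    (n : ℕ) : ‖g n‖ = ‖g 0‖ := by
  rw [Lp.norm_def, Lp.norm_def, eLpNorm_congr_ae (hg n), eLpNorm_congr_ae (hg 0)]
  congr 1
  exact eLpNorm_congr_norm_ae (.of_forall fun q => by
    simp only [norm_mul, mul_comm I, norm_exp_ofReal_mul_I])

lemma tendsto_inner_of_coeFn_eq_exp_mul {ν : Measure Y} [SFinite ν] (hμ : μ = volume.prod ν)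
    (hg : ∀ n : ℕ, g n =ᵐ[μ] fun q => exp (I * (q.1 * n : ℝ)) * h q) (y : Lp ℂ 2 μ) :
    Tendsto (fun n => inner ℂ y (g n)) atTop (𝓝 0) := by
  subst hμ
  have hF : Integrable (fun q => conj (y q) * h q) (volume.prod ν) := by
    refine (L2.integrable_inner y (g 0)).congr ?_
    filter_upwards [hg 0] with q hq
    simp [RCLike.inner_apply, hq, mul_comm]
  refine (tendsto_integral_prod_exp_mul_natCast hF).congr fun n => ?_
  rw [L2.inner_def]
  refine integral_congr_ae ?_
  filter_upwards [hg n] with q hq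
  rw [RCLike.inner_apply, hq]
  ring

end Modulation

noncomputable def fourierIcc (R v : ℝ) : ℂ := ∫ a in -R..R, exp (I * (v * a : ℝ))

lemma fourierIcc_re_pos {R v : ℝ} (hR : 0 < R) (hv : |v| * R < Real.pi / 2) :
    0 < (fourierIcc R v).re := by
  have hcont : Continuous fun a : ℝ => exp (I * (v * a : ℝ)) := by fun_prop
  rw [fourierIcc, ← RCLike.re_to_complex,
    ← intervalIntegral.intervalIntegral_re (hcont.intervalIntegrable _ _)]
  refine intervalIntegral.intervalIntegral_pos_of_pos_on
    ((RCLike.continuous_re.comp hcont).intervalIntegrable _ _) (fun a ha => ?_) (by linarith)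
  have hva : |v * a| < Real.pi / 2 := by
    rw [abs_mul]
    exact lt_of_le_of_lt (mul_le_mul_of_nonneg_left (abs_le.2 ⟨ha.1.le, ha.2.le⟩) (abs_nonneg v)) hv
  rw [RCLike.re_to_complex, mul_comm, exp_ofReal_mul_I_re]
  exact Real.cos_pos_of_mem_Ioo (abs_lt.1 hva)

lemma fourierIcc_ne_zero {R v : ℝ} (hR : 0 < R) (hv : |v| * R < Real.pi / 2) :
    fourierIcc R v ≠ 0 := fun h => by
  simpa [h] using fourierIcc_re_pos hR hv

lemma setIntegral_Icc_exp_mul_I {R : ℝ} (hR : 0 ≤ R) (t c : ℝ) :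
    ∫ a in Icc (c - R) (c + R), exp (I * (t * a : ℝ)) = exp (I * (t * c : ℝ)) * fourierIcc R t := by
  rw [integral_Icc_eq_integral_Ioc, ← intervalIntegral.integral_of_le (by linarith), fourierIcc,
    ← intervalIntegral.integral_const_mul, sub_eq_neg_add, add_comm c,
    ← intervalIntegral.integral_comp_add_right]
  congr 1 with a
  rw [← Complex.exp_add]
  push_cast
  ring_nf

def shiftedCube (p : ℕ) (R c : ℝ) : Set (ℝ × (Fin p → ℝ)) :=
  Icc (c - R) (c + R) ×ˢ univ.pi fun _ => Icc (-R) R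

lemma measurableSet_shiftedCube (p : ℕ) (R c : ℝ) : MeasurableSet (shiftedCube p R c) :=
  measurableSet_Icc.prod (.univ_pi fun _ => measurableSet_Icc)

lemma volume_shiftedCube (p : ℕ) (R c : ℝ) :
    volume (shiftedCube p R c) = ENNReal.ofReal (2 * R) ^ (p + 1) := by
  rw [shiftedCube, Measure.volume_eq_prod, Measure.prod_prod, volume_pi, Measure.pi_pi]
  simp only [Real.volume_Icc, Finset.prod_const, Finset.card_univ, Fintype.card_fin]
  rw [pow_succ', show c + R - (c - R) = 2 * R by ring, show R - -R = 2 * R by ring]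

lemma paperFourier_indicator_shiftedCube {R : ℝ} (hR : 0 ≤ R) (p : ℕ) (c t : ℝ)
    (v : Fin p → ℝ) :
    paperFourier p ((shiftedCube p R c).indicator fun _ => 1) t v =
      exp (I * (t * c : ℝ)) * fourierIcc R t * ∏ j, fourierIcc R (v j) := by
  have hsplit : ∀ q : ℝ × (Fin p → ℝ), exp (I * ((t * q.1 + ∑ j, v j * q.2 j : ℝ) : ℂ)) =
      exp (I * (t * q.1 : ℝ)) * ∏ j, exp (I * (v j * q.2 j : ℝ)) := fun q => by
    rw [← Complex.exp_sum, ← Complex.exp_add]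
    push_cast
    rw [mul_add, Finset.mul_sum]
  have hind : ∀ q, exp (I * ((t * q.1 + ∑ j, v j * q.2 j : ℝ) : ℂ)) *
      (shiftedCube p R c).indicator (fun _ => 1) q = (shiftedCube p R c).indicator
        (fun q => exp (I * (t * q.1 : ℝ)) * ∏ j, exp (I * (v j * q.2 j : ℝ))) q := fun q => by
    by_cases hq : q ∈ shiftedCube p R c
    · simp only [indicator_of_mem hq, mul_one, hsplit]
    · simp only [indicator_of_notMem hq, mul_zero]
  simp only [paperFourier, hind]
  rw [integral_indicator (measurableSet_shiftedCube p R c), shiftedCube, Measure.volume_eq_prod]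
  rw [setIntegral_prod_mul (fun a : ℝ => exp (I * (t * a : ℝ)))
      (fun b : Fin p → ℝ => ∏ j, exp (I * (v j * b j : ℝ))), setIntegral_Icc_exp_mul_I hR,
    volume_pi, Measure.restrict_pi_pi,
    integral_fintype_prod_eq_prod (fun j (x : ℝ) => exp (I * (v j * x : ℝ)))]
  congr 2 with j
  simpa using setIntegral_Icc_exp_mul_I hR (v j) 0

lemma paperFourier_congr_ae {p : ℕ} {f g : ℝ × (Fin p → ℝ) → ℂ} (hfg : f =ᵐ[volume] g) :
    paperFourier p f = paperFourier p g := by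
  ext t v
  exact integral_congr_ae (hfg.mono fun q hq => by simp only [hq])

lemma withDensity_shiftedCube_le {p : ℕ} {R : ℝ} {C : ℝ≥0∞} {W : ℝ → ℝ≥0∞}
    (hWC : ∀ b ∈ Icc (-R) R, W b ≤ C) (c : ℝ) :
    volume.withDensity (fun q : ℝ × (Fin p → ℝ) => ∏ j, W (q.2 j)) (shiftedCube p R c) ≤
      C ^ p * ENNReal.ofReal (2 * R) ^ (p + 1) := by
  rw [withDensity_apply _ (measurableSet_shiftedCube p R c), ← volume_shiftedCube p R c,
    ← setLIntegral_const]
  refine setLIntegral_mono measurable_const fun q hq => ?_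
  calc ∏ j, W (q.2 j) ≤ ∏ _j : Fin p, C :=
        Finset.prod_le_prod' fun j _ => hWC _ (hq.2 j (mem_univ j))
    _ = C ^ p := by simp

/-- `K` maps the indicator of `shiftedCube p R n` to `q ↦ e^{i q.1 n} imageProfile p x₀ R q`. -/
noncomputable def imageProfile (p : ℕ) (x₀ R : ℝ) (q : ℝ × (Fin p → ℝ)) : ℂ :=
  fourierIcc R q.1 * (∏ j, fourierIcc R (x₀ * q.1 * q.2 j)) * ((x₀ * |q.1|) ^ ((p : ℝ) / 2) : ℝ)

lemma imageProfile_ne_zero {p : ℕ} {x₀ R : ℝ} (hx₀ : 0 < x₀) (hR : 0 < R)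
    {q : ℝ × (Fin p → ℝ)} (ht : 0 < q.1) (hsmall : q.1 * (1 + x₀) * R < Real.pi / 2)
    (hu : q.2 ∈ univ.pi fun _ => Icc (-1 : ℝ) 1) :
    imageProfile p x₀ R q ≠ 0 := by
  refine mul_ne_zero (mul_ne_zero (fourierIcc_ne_zero hR ?_) ?_) ?_
  · rw [abs_of_pos ht]
    nlinarith [mul_pos (mul_pos ht hx₀) hR]
  · refine Finset.prod_ne_zero_iff.2 fun j _ => fourierIcc_ne_zero hR ?_
    have hj : |q.2 j| ≤ 1 := abs_le.2 (hu j (mem_univ j))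
    calc |x₀ * q.1 * q.2 j| * R ≤ x₀ * q.1 * R := by
          rw [abs_mul, abs_of_pos (mul_pos hx₀ ht)]
          exact mul_le_mul_of_nonneg_right (mul_le_of_le_one_right (mul_pos hx₀ ht).le hj) hR.le
      _ < Real.pi / 2 := by nlinarith [mul_pos ht hR]
  · exact ofReal_ne_zero.2 (Real.rpow_pos_of_pos (by positivity) _).ne'

lemma not_imageProfile_ae_eq_zero {p : ℕ} {x₀ R : ℝ} (hx₀ : 0 < x₀) (hR : 0 < R) :
    ¬ imageProfile p x₀ R =ᵐ[volume.restrict (univ ×ˢ univ.pi fun _ => Icc (-1 : ℝ) 1)] 0 := by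
  set B : Set (Fin p → ℝ) := univ.pi fun _ => Icc (-1 : ℝ) 1
  set τ := Real.pi / 2 / ((1 + x₀) * R)
  have hO : MeasurableSet (Ioo 0 τ ×ˢ B) :=
    measurableSet_Ioo.prod (.univ_pi fun _ => measurableSet_Icc)
  intro h
  have hzero := (ae_restrict_iff' hO).1 (ae_restrict_of_ae_restrict_of_subset
    (prod_mono (subset_univ _) le_rfl) h)
  have hnull : volume (Ioo 0 τ ×ˢ B) = 0 := by
    refine measure_mono_null (fun q hq => ?_) (ae_iff.1 hzero)
    refine fun hq0 => imageProfile_ne_zero hx₀ hR hq.1.1 ?_ hq.2 (hq0 hq)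
    rw [mul_assoc]
    exact (lt_div_iff₀ (by positivity)).1 hq.1.2
  rw [Measure.volume_eq_prod, Measure.prod_prod, volume_pi, Measure.pi_pi] at hnull
  simp only [Real.volume_Ioo, Real.volume_Icc, Finset.prod_const, mul_eq_zero, pow_eq_zero_iff',
    ENNReal.ofReal_eq_zero] at hnull
  rcases hnull with hτ | hside
  · have : 0 < τ := by positivity
    linarith
  · norm_num at hside

theorem not_isCompactOperator_of_weight {p : ℕ} {x₀ R : ℝ} (hx₀ : 0 < x₀) (hR : 0 < R)
    {W : ℝ → ℝ≥0∞} (hWm : Measurable W) (hW0 : ∀ b, W b ≠ 0) {C : ℝ≥0∞} (hC : C ≠ ⊤)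
    (hWC : ∀ b ∈ Icc (-R) R, W b ≤ C)
    (K : Lp ℂ 2 (volume.withDensity fun q : ℝ × (Fin p → ℝ) => ∏ j, W (q.2 j)) →L[ℂ]
        Lp ℂ 2 (volume.restrict (univ ×ˢ univ.pi fun _ : Fin p => Icc (-1 : ℝ) 1)))
    (hK : ∀ f : Lp ℂ 2 (volume.withDensity fun q : ℝ × (Fin p → ℝ) => ∏ j, W (q.2 j)),
        Integrable (⇑f) volume →
        ⇑(K f) =ᵐ[volume.restrict (univ ×ˢ univ.pi fun _ : Fin p => Icc (-1 : ℝ) 1)]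
          fun q => paperFourier p (⇑f) q.1 ((x₀ * q.1) • q.2) *
            ((x₀ * |q.1|) ^ ((p : ℝ) / 2) : ℝ)) :
    ¬ IsCompactOperator K := by
  have hac : volume ≪ volume.withDensity fun q : ℝ × (Fin p → ℝ) => ∏ j, W (q.2 j) :=
    withDensity_absolutelyContinuous' (by fun_prop) (.of_forall fun q => Finset.prod_ne_zero_iff.2 fun j _ => hW0 _)
  have hμ : ∀ c, volume.withDensity (fun q : ℝ × (Fin p → ℝ) => ∏ j, W (q.2 j))
      (shiftedCube p R c) ≤ C ^ p * ENNReal.ofReal (2 * R) ^ (p + 1) :=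
    withDensity_shiftedCube_le hWC
  have hfin : C ^ p * ENNReal.ofReal (2 * R) ^ (p + 1) ≠ ⊤ := by finiteness
  let f : ℕ → Lp ℂ 2 _ := fun n =>
    indicatorConstLp 2 (measurableSet_shiftedCube p R n) (ne_top_of_le_ne_top hfin (hμ n)) 1
  have hKf : ∀ n : ℕ, ⇑(K (f n)) =ᵐ[volume.restrict (univ ×ˢ univ.pi fun _ => Icc (-1) 1)]
      fun q => exp (I * (q.1 * n : ℝ)) * imageProfile p x₀ R q := fun n => by
    have hf : ⇑(f n) =ᵐ[volume] (shiftedCube p R n).indicator fun _ => 1 :=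
      hac.ae_le indicatorConstLp_coeFn
    have hint : Integrable (f n) volume := by
      refine ((integrable_indicator_iff (measurableSet_shiftedCube p R n)).2 ?_).congr hf.symm
      exact integrableOn_const (by rw [volume_shiftedCube]; finiteness)
    filter_upwards [hK _ hint] with q hq
    rw [hq, paperFourier_congr_ae hf, paperFourier_indicator_shiftedCube hR.le]
    simp only [imageProfile, Pi.smul_apply, smul_eq_mul]
    ring
  have hbdd : Bornology.IsBounded (range f) := by
    refine isBounded_iff_forall_norm_le.2
      ⟨(C ^ p * ENNReal.ofReal (2 * R) ^ (p + 1)).toReal ^ (1 / 2 : ℝ), ?_⟩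
    rintro _ ⟨n, rfl⟩
    rw [norm_indicatorConstLp two_ne_zero ENNReal.ofNat_ne_top, norm_one, one_mul]
    exact Real.rpow_le_rpow ENNReal.toReal_nonneg (ENNReal.toReal_mono hfin (hμ n)) (by norm_num)
  have hpos : 0 < ‖K (f 0)‖ := norm_pos_iff.2 fun h0 => not_imageProfile_ae_eq_zero hx₀ hR <| by
    filter_upwards [hKf 0, h0 ▸ Lp.coeFn_zero ..] with q hq hq0
    simpa [hq0] using hq.symm
  exact not_isCompactOperator_of_weakly_null K hbdd
    (tendsto_inner_of_coeFn_eq_exp_mul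
      (by rw [Measure.volume_eq_prod, ← Measure.prod_restrict, Measure.restrict_univ]) hKf) hpos
    fun n => (norm_eq_of_coeFn_eq_exp_mul hKf n).ge

lemma measurable_boxWeight (R : ℝ) : Measurable (boxWeight R) :=
  Measurable.ite (measurableSet_le measurable_abs measurable_const) measurable_const
    measurable_const

lemma boxWeight_ne_zero (R b : ℝ) : boxWeight R b ≠ 0 := by
  unfold boxWeight
  split_ifs <;> simp

lemma boxWeight_le_one {R b : ℝ} (hb : b ∈ Icc (-R) R) : boxWeight R b ≤ 1 := by
  rw [boxWeight, if_pos (abs_le.2 hb)]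

lemma measurable_coshWeight (R : ℝ) : Measurable (coshWeight R) := by
  unfold coshWeight
  fun_prop

lemma coshWeight_ne_zero (R b : ℝ) : coshWeight R b ≠ 0 := by
  simpa [coshWeight] using Real.cosh_pos _

lemma coshWeight_le {R b : ℝ} (hR : 0 < R) (hb : b ∈ Icc (-R) R) :
    coshWeight R b ≤ ENNReal.ofReal (Real.cosh 1) := by
  refine ENNReal.ofReal_le_ofReal (Real.cosh_le_cosh.2 ?_)
  rw [abs_div, abs_of_pos hR, abs_one, div_le_one hR]
  exact abs_le.2 hb

/-- Proposition 1 (non-compactness): with `w = 1`, the space `L²(1 ⊗ W^{⊗p})` is realized as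
`Lp ℂ 2` of Lebesgue measure with density `∏_j W(b_j)`, and `L²(ℝ × [-1,1]^p)` as `Lp ℂ 2` of
the restricted Lebesgue measure.  Any continuous linear operator `K` between them that agrees
with `f ↦ 𝓕[f](t, x₀ t u) (x₀|t|)^{p/2}` (on integrable representatives, a dense class) is not
a compact operator. -/
theorem K_not_compact
    (p : ℕ) (x₀ R : ℝ) (hx₀ : 0 < x₀) (hR : 0 < R)
    (W : ℝ → ℝ≥0∞) (hW : W = boxWeight R ∨ W = coshWeight R)
    (K : Lp ℂ 2 (volume.withDensity fun q : ℝ × (Fin p → ℝ) => ∏ j, W (q.2 j)) →L[ℂ]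
        Lp ℂ 2 (volume.restrict
          (Set.univ ×ˢ Set.pi Set.univ (fun _ : Fin p => Set.Icc (-1 : ℝ) 1))))
    (hK : ∀ f : Lp ℂ 2 (volume.withDensity fun q : ℝ × (Fin p → ℝ) => ∏ j, W (q.2 j)),
        Integrable (⇑f) volume →
        ⇑(K f) =ᵐ[volume.restrict
            (Set.univ ×ˢ Set.pi Set.univ (fun _ : Fin p => Set.Icc (-1 : ℝ) 1))]
          fun q => paperFourier p (⇑f) q.1 ((x₀ * q.1) • q.2) *
            Complex.ofReal ((x₀ * |q.1|) ^ ((p : ℝ) / 2))) :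
    ¬ IsCompactOperator K := by
  rcases hW with rfl | rfl
  · exact not_isCompactOperator_of_weight hx₀ hR (measurable_boxWeight R) (boxWeight_ne_zero R)
      ENNReal.one_ne_top (fun _ => boxWeight_le_one) K hK
  · exact not_isCompactOperator_of_weight hx₀ hR (measurable_coshWeight R) (coshWeight_ne_zero R)
      ENNReal.ofReal_ne_top (fun _ => coshWeight_le hR) K hK
end

section
/- Let p ∈ ℕ, R > 0, let w : ℝ → [1,∞) be measurable with ∫_ℝ 1/w(a) da < ∞, and let f be a probability density on ℝ^{1+p} with M := (∫_{ℝ^{1+p}} f(a,b)² w(a) ∏_{j=1}^p e^{|b_j|/R} da db)^{1/2} < ∞. Then for every ε ∈ (0,1) and every k ∈ {1,…,p}, setting λ = (1−ε)/(2R), one has ∫_{ℝ^{1+p}} e^{λ|b_k|} f(a,b) da db ≤ M · (∫_ℝ 1/w(a) da)^{1/2} · (2R/ε)^{p/2} < ∞. In particular, if (α,β) is a random vector with density f, the Laplace transform E[e^{λ β_k}] is finite for every 0 ≤ λ < 1/(2R). -/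
/-!
Cauchy–Schwarz against the weight `(1 / w a) ∏ⱼ exp (-ε |b j| / R)`: its product with the
weight of `M²` is `∏ⱼ exp ((1 - ε) |b j| / R) ≥ exp (2λ |b k|)`, and by Tonelli it integrates to
`(∫ 1 / w) (2R / ε)ᵖ`, since `∫ exp (-c |x|) dx = 2 / c`. The Laplace transform at
`0 ≤ λ < 1 / (2R)` is then dominated by the case `ε = (1 - 2Rλ) / 2`.
-/

open MeasureTheory Real
open scoped ENNReal

theorem integral_exp_neg_mul_abs {c : ℝ} (hc : 0 < c) : ∫ x : ℝ, exp (-c * |x|) = 2 / c := by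
  rw [integral_comp_abs (f := fun x => exp (-c * x)), integral_exp_mul_Ioi (neg_neg_of_pos hc)]
  field_simp
  simp

theorem integrable_exp_neg_mul_abs {c : ℝ} (hc : 0 < c) :
    Integrable fun x : ℝ => exp (-c * |x|) :=
  .of_integral_ne_zero <| by rw [integral_exp_neg_mul_abs hc]; positivity

theorem lintegral_prod_exp_neg_mul_abs (ι : Type*) [Fintype ι] {c : ℝ} (hc : 0 < c) :
    ∫⁻ b : ι → ℝ, ENNReal.ofReal (∏ j, exp (-c * |b j|)) =
      ENNReal.ofReal ((2 / c) ^ Fintype.card ι) := by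
  rw [← ofReal_integral_eq_lintegral_ofReal, integral_fintype_prod_volume_eq_pow
    (fun x => exp (-c * |x|)), integral_exp_neg_mul_abs hc]
  · exact Integrable.fintype_prod (f := fun _ x => exp (-c * |x|))
      fun _ => integrable_exp_neg_mul_abs hc
  · exact .of_forall fun b => by positivity

theorem lintegral_mul_prod_exp_neg_mul_abs {α ι : Type*} [MeasureSpace α]
    [SFinite (volume : Measure α)] [Fintype ι] {u : α → ℝ} (hu : AEMeasurable u)
    {c : ℝ} (hc : 0 < c) :
    ∫⁻ q : α × (ι → ℝ), ENNReal.ofReal (u q.1 * ∏ j, exp (-c * |q.2 j|)) =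
      (∫⁻ a, ENNReal.ofReal (u a)) * ENNReal.ofReal ((2 / c) ^ Fintype.card ι) := by
  simp_rw [ENNReal.ofReal_mul' (Finset.prod_nonneg fun _ _ => (exp_pos _).le)]
  rw [Measure.volume_eq_prod,
    lintegral_prod_mul (g := fun b : ι → ℝ => ENNReal.ofReal (∏ j, exp (-c * |b j|)))
      hu.ennreal_ofReal (Measurable.aemeasurable (by fun_prop)),
    lintegral_prod_exp_neg_mul_abs ι hc]

theorem sq_lintegral_ofReal_le_mul {α : Type*} [MeasurableSpace α] {μ : Measure α}
    {F G h : α → ℝ} (hF : AEMeasurable F μ) (hG : AEMeasurable G μ)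
    (hF0 : ∀ x, 0 ≤ F x) (hh : ∀ x, h x ^ 2 ≤ F x * G x) :
    (∫⁻ x, ENNReal.ofReal (h x) ∂μ) ^ 2 ≤
      (∫⁻ x, ENNReal.ofReal (F x) ∂μ) * ∫⁻ x, ENNReal.ofReal (G x) ∂μ := by
  have hroot : ∀ x, ENNReal.ofReal (h x) ≤
      ENNReal.ofReal (F x) ^ (1 / 2 : ℝ) * ENNReal.ofReal (G x) ^ (1 / 2 : ℝ) := fun x => by
    rw [← ENNReal.mul_rpow_of_nonneg _ _ (by norm_num), ← ENNReal.ofReal_mul (hF0 x),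
      ENNReal.ofReal_rpow_of_nonneg _ (by norm_num), ← sqrt_eq_rpow]
    · exact ENNReal.ofReal_le_ofReal (le_sqrt_of_sq_le (hh x))
    · nlinarith [hh x, sq_nonneg (h x)]
  calc (∫⁻ x, ENNReal.ofReal (h x) ∂μ) ^ 2
      ≤ ((∫⁻ x, ENNReal.ofReal (F x) ∂μ) ^ (1 / 2 : ℝ) *
          (∫⁻ x, ENNReal.ofReal (G x) ∂μ) ^ (1 / 2 : ℝ)) ^ 2 := by
        gcongr
        exact (lintegral_mono hroot).trans (ENNReal.lintegral_mul_norm_pow_le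
          hF.ennreal_ofReal hG.ennreal_ofReal (by norm_num) (by norm_num) (by norm_num))
    _ = _ := by
        rw [← ENNReal.mul_rpow_of_nonneg _ _ (by norm_num), ← ENNReal.rpow_natCast,
          ← ENNReal.rpow_mul]
        norm_num

theorem exp_mul_abs_le_prod {ι : Type*} [Fintype ι] {t : ℝ} (ht : 0 ≤ t) (b : ι → ℝ) (k : ι) :
    exp (t * |b k|) ≤ ∏ j, exp (t * |b j|) := by
  rw [← exp_sum]
  gcongr
  exact Finset.single_le_sum (fun j _ => mul_nonneg ht (abs_nonneg (b j))) (Finset.mem_univ k)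

theorem sq_exp_mul_abs_mul_le {ι : Type*} [Fintype ι] {R ε v y : ℝ} (hR : 0 < R) (hε : ε ≤ 1)
    (hv : v ≠ 0) (b : ι → ℝ) (k : ι) :
    (exp ((1 - ε) / (2 * R) * |b k|) * y) ^ 2 ≤
      (y ^ 2 * v * ∏ j, exp (|b j| / R)) * (1 / v * ∏ j, exp (-(ε / R) * |b j|)) := by
  have hsplit : ∀ j, exp (|b j| / R) * exp (-(ε / R) * |b j|) = exp ((1 - ε) / R * |b j|) :=
    fun j => by rw [← exp_add]; congr 1; field_simp; ring
  calc (exp ((1 - ε) / (2 * R) * |b k|) * y) ^ 2 = y ^ 2 * exp ((1 - ε) / R * |b k|) := by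
        rw [mul_pow, ← exp_nat_mul]; field_simp; ring_nf
    _ ≤ y ^ 2 * ∏ j, exp ((1 - ε) / R * |b j|) := by
        gcongr
        exact exp_mul_abs_le_prod (div_nonneg (by linarith) hR.le) b k
    _ = _ := by
        simp_rw [← hsplit, Finset.prod_mul_distrib]
        field_simp

theorem sq_lintegral_exp_mul_abs_mul_le {α ι : Type*} [MeasureSpace α]
    [SFinite (volume : Measure α)] [Fintype ι] {R ε : ℝ} (hR : 0 < R) (hε : 0 < ε) (hε1 : ε ≤ 1)
    {w : α → ℝ} (hw : ∀ a, 0 < w a) (hwm : Measurable w) {f : α × (ι → ℝ) → ℝ}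
    (hf : AEMeasurable f) (k : ι) :
    (∫⁻ q, ENNReal.ofReal (exp ((1 - ε) / (2 * R) * |q.2 k|) * f q)) ^ 2 ≤
      (∫⁻ q, ENNReal.ofReal (f q ^ 2 * w q.1 * ∏ j, exp (|q.2 j| / R))) *
        (∫⁻ a, ENNReal.ofReal (1 / w a)) * ENNReal.ofReal ((2 * R / ε) ^ Fintype.card ι) := by
  calc _ ≤ _ * ∫⁻ q : α × (ι → ℝ), ENNReal.ofReal (1 / w q.1 * ∏ j, exp (-(ε / R) * |q.2 j|)) :=
        sq_lintegral_ofReal_le_mul (by fun_prop) (by fun_prop)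
          (fun q => by have := hw q.1; positivity)
          fun q => sq_exp_mul_abs_mul_le hR hε1 (hw q.1).ne' q.2 k
    _ = _ := by
        rw [lintegral_mul_prod_exp_neg_mul_abs (u := fun a => 1 / w a) (by fun_prop)
          (div_pos hε hR), mul_assoc, div_div_eq_mul_div]

theorem no_heavy_tails_of_weighted_L2_general
    (p : ℕ) (R : ℝ) (hR : 0 < R)
    (w : ℝ → ℝ) (hw : ∀ a, 1 ≤ w a) (hwm : Measurable w)
    (hwint : (∫⁻ a : ℝ, ENNReal.ofReal (1 / w a)) < ⊤)
    (f : ℝ × (Fin p → ℝ) → ℝ) (hfm : Measurable f) (hf0 : ∀ q, 0 ≤ f q)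
    (hM : (∫⁻ q : ℝ × (Fin p → ℝ),
        ENNReal.ofReal (f q ^ 2 * w q.1 * ∏ j, Real.exp (|q.2 j| / R))) < ⊤) :
    (∀ ε : ℝ, 0 < ε → ε < 1 → ∀ k : Fin p,
        (∫⁻ q : ℝ × (Fin p → ℝ),
            ENNReal.ofReal (Real.exp ((1 - ε) / (2 * R) * |q.2 k|) * f q)) ^ 2 ≤
          (∫⁻ q : ℝ × (Fin p → ℝ),
              ENNReal.ofReal (f q ^ 2 * w q.1 * ∏ j, Real.exp (|q.2 j| / R))) *
            (∫⁻ a : ℝ, ENNReal.ofReal (1 / w a)) * ENNReal.ofReal ((2 * R / ε) ^ p)) ∧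
      ∀ (k : Fin p) (lam : ℝ), 0 ≤ lam → lam < 1 / (2 * R) →
        (∫⁻ q : ℝ × (Fin p → ℝ), ENNReal.ofReal (Real.exp (lam * q.2 k) * f q)) < ⊤ := by
  have tail (ε : ℝ) (hε : 0 < ε) (hε1 : ε < 1) (k : Fin p) := by
    simpa only [Fintype.card_fin] using sq_lintegral_exp_mul_abs_mul_le hR hε hε1.le
      (fun a => one_pos.trans_le (hw a)) hwm hfm.aemeasurable k
  refine ⟨tail, fun k lam hlam0 hlam => ?_⟩
  set ε := (1 - 2 * R * lam) / 2 with hε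
  have h2Rlam0 : 0 ≤ 2 * R * lam := by positivity
  have h2Rlam : 2 * R * lam < 1 := by rwa [lt_div_iff₀ (by positivity), mul_comm] at hlam
  have hlam_le : lam ≤ (1 - ε) / (2 * R) := by
    rw [le_div_iff₀ (by positivity)]
    linarith
  have hfin := ENNReal.pow_lt_top_iff.1 <| (tail ε (by linarith) (by linarith) k).trans_lt <|
    ENNReal.mul_lt_top (ENNReal.mul_lt_top hM hwint) ENNReal.ofReal_lt_top
  refine lt_of_le_of_lt (lintegral_mono fun q => ?_) (hfin.resolve_right two_ne_zero)
  refine ENNReal.ofReal_le_ofReal (mul_le_mul_of_nonneg_right (exp_le_exp.2 ?_) (hf0 q))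
  exact (mul_le_mul_of_nonneg_left (le_abs_self _) hlam0).trans
    (mul_le_mul_of_nonneg_right hlam_le (abs_nonneg _))

/-- The tail bound of Section 3 of the paper: if the joint density `f` of `(α,β)` belongs to
the weighted space `L²(w ⊗ (e^{|·|/R})^{⊗p})` with `M` its weighted norm, then for every
`ε ∈ (0,1)` and `k`, with `λ = (1-ε)/(2R)`,
`E[e^{λ|β_k|}] ≤ M (∫ 1/w)^{1/2} (2R/ε)^{p/2}` (stated below with both sides squared), and in
particular `E[e^{λ β_k}] < ∞` for every `0 ≤ λ < 1/(2R)`. -/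
theorem no_heavy_tails_of_weighted_L2
    (p : ℕ) (R : ℝ) (hR : 0 < R)
    (w : ℝ → ℝ) (hw : ∀ a, 1 ≤ w a) (hwm : Measurable w)
    (hwint : (∫⁻ a : ℝ, ENNReal.ofReal (1 / w a)) < ⊤)
    (f : ℝ × (Fin p → ℝ) → ℝ) (hfm : Measurable f) (hf0 : ∀ q, 0 ≤ f q)
    (hf1 : (∫⁻ q : ℝ × (Fin p → ℝ), ENNReal.ofReal (f q)) = 1)
    (hM : (∫⁻ q : ℝ × (Fin p → ℝ),
        ENNReal.ofReal (f q ^ 2 * w q.1 * ∏ j, Real.exp (|q.2 j| / R))) < ⊤) :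
    (∀ ε : ℝ, 0 < ε → ε < 1 → ∀ k : Fin p,
        (∫⁻ q : ℝ × (Fin p → ℝ),
            ENNReal.ofReal (Real.exp ((1 - ε) / (2 * R) * |q.2 k|) * f q)) ^ 2 ≤
          (∫⁻ q : ℝ × (Fin p → ℝ),
              ENNReal.ofReal (f q ^ 2 * w q.1 * ∏ j, Real.exp (|q.2 j| / R))) *
            (∫⁻ a : ℝ, ENNReal.ofReal (1 / w a)) * ENNReal.ofReal ((2 * R / ε) ^ p)) ∧
      ∀ (k : Fin p) (lam : ℝ), 0 ≤ lam → lam < 1 / (2 * R) →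
        (∫⁻ q : ℝ × (Fin p → ℝ), ENNReal.ofReal (Real.exp (lam * q.2 k) * f q)) < ⊤ :=
  no_heavy_tails_of_weighted_L2_general p R hR w hw hwm hwint f hfm hf0 hM
end

section
/- For every real c > 0 and every integer m ≥ 0, √π · c^m · (m!)² / ((2m)! · Γ(m + 3/2)) ≤ (√(2π) e^{3/2} / 3) · (e c / (4(m + 3/2)))^m, where Γ denotes the Gamma function. -/
/-!
By Legendre's duplication formula, `(2m)! √π = 4^m m! Γ(m + 1/2)`, and `Γ(m + 3/2) = (m + 1/2) Γ(m + 1/2)`.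
Log-convexity of `Γ` gives `m! = Γ(m + 1) ≤ √(m + 1/2) Γ(m + 1/2)`, so the left-hand side is at most
`π c^m / (4^m m!)`. It remains to see `π (m + 3/2)^m ≤ (√(2π) e^{3/2} / 3) e^m m!`: the constant
exceeds `π`, and `(m + 3/2)^m ≤ e^m m!` follows by induction on `m`, the step resting on
`1 + x + x²/2 ≤ eˣ`.
-/

open Nat

namespace Real

theorem Gamma_add_half_le_sqrt_mul_Gamma {s : ℝ} (hs : 0 < s) :
    Gamma (s + 1 / 2) ≤ √s * Gamma s := by
  have h := Gamma_mul_add_mul_le_rpow_Gamma_mul_rpow_Gamma hs (by linarith : 0 < s + 1)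
    one_half_pos one_half_pos (add_halves 1)
  rw [Gamma_add_one hs.ne', mul_rpow hs.le (Gamma_pos_of_pos hs).le, ← mul_assoc,
    mul_comm (Gamma s ^ _), mul_assoc, ← rpow_add (Gamma_pos_of_pos hs), add_halves, rpow_one,
    ← sqrt_eq_rpow] at h
  convert h using 2
  ring

theorem factorial_two_mul_mul_sqrt_pi (m : ℕ) :
    ((2 * m)! : ℝ) * √π = 4 ^ m * m ! * Gamma (m + 1 / 2) := by
  have h := Gamma_mul_Gamma_add_half ((m : ℝ) + 1 / 2)
  rw [show (m : ℝ) + 1 / 2 + 1 / 2 = m + 1 by ring, show 2 * ((m : ℝ) + 1 / 2) = (2 * m : ℕ) + 1 by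
    push_cast; ring, show (1 : ℝ) - ((2 * m : ℕ) + 1) = -(2 * m : ℕ) by ring, rpow_neg zero_le_two,
    rpow_natCast, Gamma_nat_eq_factorial, Gamma_nat_eq_factorial, pow_mul] at h
  rw [mul_assoc, mul_comm (m ! : ℝ), h]
  field_simp
  norm_num

theorem four_pow_mul_factorial_pow_three_le (m : ℕ) :
    4 ^ m * (m ! : ℝ) ^ 3 ≤ √π * (2 * m)! * Gamma (m + 3 / 2) := by
  have hm : (0 : ℝ) < m + 1 / 2 := by positivity
  have hGamma := Gamma_add_half_le_sqrt_mul_Gamma hm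
  rw [show (m : ℝ) + 1 / 2 + 1 / 2 = m + 1 by ring, Gamma_nat_eq_factorial] at hGamma
  have hsq : (m ! : ℝ) ^ 2 ≤ (m + 1 / 2) * Gamma (m + 1 / 2) ^ 2 := by
    calc (m ! : ℝ) ^ 2 ≤ (√(m + 1 / 2) * Gamma (m + 1 / 2)) ^ 2 := by gcongr
      _ = (m + 1 / 2) * Gamma (m + 1 / 2) ^ 2 := by rw [mul_pow, sq_sqrt hm.le]
  calc 4 ^ m * (m ! : ℝ) ^ 3 = 4 ^ m * m ! * (m ! : ℝ) ^ 2 := by ring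
    _ ≤ 4 ^ m * m ! * ((m + 1 / 2) * Gamma (m + 1 / 2) ^ 2) := by gcongr
    _ = (2 * m)! * √π * ((m + 1 / 2) * Gamma (m + 1 / 2)) := by
      rw [factorial_two_mul_mul_sqrt_pi]; ring
    _ = √π * (2 * m)! * Gamma (m + 3 / 2) := by
      rw [show (m : ℝ) + 3 / 2 = m + 1 / 2 + 1 by ring, Gamma_add_one hm.ne']; ring

theorem add_one_pow_le_pow_mul_exp {y : ℝ} (hy : 0 < y) (m : ℕ) :
    (y + 1) ^ m ≤ y ^ m * exp (m / y) := by
  have h : y + 1 ≤ y * exp (1 / y) := by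
    calc y + 1 = y * (1 / y + 1) := by field_simp; ring
      _ ≤ y * exp (1 / y) := by gcongr; exact add_one_le_exp _
  calc (y + 1) ^ m ≤ (y * exp (1 / y)) ^ m := by gcongr
    _ = y ^ m * exp (m / y) := by rw [mul_pow, ← exp_nat_mul, mul_one_div]

theorem succ_add_le_succ_mul_exp (m : ℕ) {a : ℝ} (ha : 0 < a) (ha' : a ≤ 3 / 2) :
    m + 1 + a ≤ (m + 1) * exp (a / (m + a)) := by
  have hy : 0 < (m : ℝ) + a := by positivity
  have hm : (0 : ℝ) ≤ m := m.cast_nonneg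
  have hremainder : (m + 1) * (1 + a / (m + a) + (a / (m + a)) ^ 2 / 2) - (m + 1 + a)
      = a * (m * (2 - a) + a * (3 - 2 * a)) / (2 * (m + a) ^ 2) := by
    field_simp; ring
  calc (m : ℝ) + 1 + a ≤ (m + 1) * (1 + a / (m + a) + (a / (m + a)) ^ 2 / 2) := by
        rw [← sub_nonneg, hremainder]
        have : 0 ≤ m * (2 - a) + a * (3 - 2 * a) := by nlinarith
        positivity
    _ ≤ (m + 1) * exp (a / (m + a)) := by
        gcongr; exact quadratic_le_exp_of_nonneg (div_nonneg ha.le hy.le)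

theorem add_pow_le_exp_one_pow_mul_factorial {a : ℝ} (ha : 0 < a) (ha' : a ≤ 3 / 2) (m : ℕ) :
    (m + a) ^ m ≤ exp 1 ^ m * m ! := by
  induction m with
  | zero => simp
  | succ m ih =>
    have hy : 0 < (m : ℝ) + a := by positivity
    have hexp : exp 1 = exp (a / (m + a)) * exp (m / (m + a)) := by
      rw [← exp_add, ← add_div, add_comm, div_self hy.ne']
    calc ((m + 1 : ℕ) + a : ℝ) ^ (m + 1) = (m + 1 + a) * ((m + a) + 1) ^ m := by
          push_cast; ring
      _ ≤ (m + 1) * exp (a / (m + a)) * ((m + a) ^ m * exp (m / (m + a))) := by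
          gcongr
          · exact succ_add_le_succ_mul_exp m ha ha'
          · exact add_one_pow_le_pow_mul_exp hy m
      _ = exp 1 * (m + 1) * (m + a) ^ m := by rw [hexp]; ring
      _ ≤ exp 1 * (m + 1) * (exp 1 ^ m * m !) := by gcongr
      _ = exp 1 ^ (m + 1) * (m + 1 : ℕ)! := by push_cast [factorial_succ]; ring

theorem pi_le_sqrt_two_pi_mul_exp_three_halves_div_three : π ≤ √(2 * π) * exp (3 / 2) / 3 := by
  have he : 2.7 < exp 1 := lt_trans (by norm_num) exp_one_gt_d9
  have hsqrt : √(2 * π) * exp (3 / 2) = √(2 * π * exp 1 ^ 3) := by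
    rw [← exp_nat_mul, sqrt_mul (by positivity : (0 : ℝ) ≤ 2 * π), ← exp_half]
    norm_num
  rw [le_div_iff₀ (by norm_num), hsqrt, mul_comm, le_sqrt (by positivity) (by positivity)]
  have : 9 * π ≤ 2 * exp 1 ^ 3 := by
    nlinarith [pi_lt_d2, pow_le_pow_left₀ (by norm_num) he.le 3]
  nlinarith [pi_pos]

end Real

open Real

/-- The quantitative inequality of Lemma B.6 of the paper: for every `c > 0` and `m ∈ ℕ`,
`√π c^m (m!)² / ((2m)! Γ(m + 3/2)) ≤ (√(2π) e^{3/2} / 3) (e c / (4(m + 3/2)))^m`. -/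
theorem gamma_factorial_singular_value_bound (c : ℝ) (hc : 0 < c) (m : ℕ) :
    Real.sqrt Real.pi * c ^ m * (Nat.factorial m : ℝ) ^ 2 /
        ((Nat.factorial (2 * m) : ℝ) * Real.Gamma ((m : ℝ) + 3 / 2)) ≤
      Real.sqrt (2 * Real.pi) * Real.exp (3 / 2) / 3 *
        (Real.exp 1 * c / (4 * ((m : ℝ) + 3 / 2))) ^ m := by
  have hGamma : 0 < Gamma (m + 3 / 2) := Gamma_pos_of_pos (by positivity)
  have hfactorial := four_pow_mul_factorial_pow_three_le m
  have hpow := add_pow_le_exp_one_pow_mul_factorial (a := 3 / 2) (by norm_num) le_rfl m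
  have hconst := pi_le_sqrt_two_pi_mul_exp_three_halves_div_three
  calc √π * c ^ m * (m ! : ℝ) ^ 2 / ((2 * m)! * Gamma (m + 3 / 2))
      ≤ π * c ^ m / (4 ^ m * m !) := by
        rw [div_le_div_iff₀ (by positivity) (by positivity)]
        calc √π * c ^ m * (m ! : ℝ) ^ 2 * (4 ^ m * m !)
            = √π * c ^ m * (4 ^ m * (m ! : ℝ) ^ 3) := by ring
          _ ≤ √π * c ^ m * (√π * (2 * m)! * Gamma (m + 3 / 2)) := by gcongr
          _ = π * c ^ m * ((2 * m)! * Gamma (m + 3 / 2)) := by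
              linear_combination (c ^ m * (2 * m)! * Gamma (m + 3 / 2)) * mul_self_sqrt pi_pos.le
    _ ≤ √(2 * π) * exp (3 / 2) / 3 * (exp 1 * c / (4 * (m + 3 / 2))) ^ m := by
        rw [div_pow, mul_pow, mul_pow, mul_div_assoc',
          div_le_div_iff₀ (by positivity) (by positivity)]
        calc π * c ^ m * (4 ^ m * (m + 3 / 2) ^ m)
            ≤ √(2 * π) * exp (3 / 2) / 3 * c ^ m * (4 ^ m * (exp 1 ^ m * m !)) := by gcongr
          _ = √(2 * π) * exp (3 / 2) / 3 * (exp 1 ^ m * c ^ m) * (4 ^ m * m !) := by ring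
end

section
/- Let p ∈ ℕ, x₀ > 0, and f ∈ L¹(ℝ^{1+p};ℂ). For t ∈ ℝ, t ≠ 0, define the partial Fourier transform in the first variable 𝓕₁f(t,b) = ∫_ℝ e^{i t a} f(a,b) da for b ∈ ℝ^p, and assume 𝓕₁f(t,·) ∈ L²(ℝ^p). Then ∫_{[-1,1]^p} |𝓕[f](t, x₀ t u)|² du ≤ (2π/(x₀|t|))^p ∫_{ℝ^p} |𝓕₁f(t,b)|² db, where 𝓕[f](t,v) = ∫_{ℝ^{1+p}} e^{i(t a + v·b)} f(a,b) da db. -/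
open MeasureTheory Set
open scoped ENNReal

/-- The partial Fourier transform in the first variable:
`𝓕₁f(t,b) = ∫ e^{i t a} f(a,b) da`. -/
noncomputable def partialFourierFst (p : ℕ) (f : ℝ × (Fin p → ℝ) → ℂ) (t : ℝ)
    (b : Fin p → ℝ) : ℂ :=
  ∫ a : ℝ, Complex.exp (Complex.I * ((t * a : ℝ) : ℂ)) * f (a, b)

/-!
Integrating out the first variable, `𝓕[f](t, ·)` is the Fourier transform, with kernel
`e^{i v·b}`, of `h = 𝓕₁f(t, ·) ∈ L¹ ∩ L²(ℝ^p)`. For such `h` the Fourier integral agrees a.e. with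
Mathlib's `L²` Fourier transform, since both define the same tempered distribution; Plancherel
then gives `∫ |ĥ|² = (2π)^p ∫ |h|²`, the factor coming from the rescaling `v ↦ -v / (2π)` to
Mathlib's normalisation. The bound follows by enlarging the box to `ℝ^p` and substituting
`v = x₀ t u`, which contributes the factor `|x₀ t|^{-p}`.
-/

open FourierTransform Module
open scoped ContDiff Real SchwartzMap

theorem MeasureTheory.lintegral_comp_smul {E : Type*} [NormedAddCommGroup E] [NormedSpace ℝ E]
    [MeasurableSpace E] [BorelSpace E] [FiniteDimensional ℝ E] (μ : Measure E)
    [μ.IsAddHaarMeasure] (f : E → ℝ≥0∞) {R : ℝ} (hR : R ≠ 0) :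
    ∫⁻ x, f (R • x) ∂μ = ENNReal.ofReal |(R ^ finrank ℝ E)⁻¹| * ∫⁻ x, f x ∂μ := by
  rw [← smul_eq_mul, ← lintegral_smul_measure, ← Measure.map_addHaar_smul μ hR]
  exact (lintegral_map_equiv f (Homeomorph.smulOfNeZero R hR).toMeasurableEquiv).symm

theorem MeasureTheory.Integrable.cexp_I_mul_mul {α : Type*} [MeasurableSpace α] {μ : Measure α}
    {f : α → ℂ} (hf : Integrable f μ) {φ : α → ℝ} (hφ : Measurable φ) :
    Integrable (fun x => Complex.exp (Complex.I * φ x) * f x) μ :=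
  hf.bdd_mul (c := 1)
    (by fun_prop : Measurable fun x => Complex.exp (Complex.I * φ x)).aestronglyMeasurable
    (.of_forall fun x => by simp [Complex.norm_exp])

section Plancherel

variable {E : Type*} [NormedAddCommGroup E] [InnerProductSpace ℝ E] [FiniteDimensional ℝ E]
  [MeasurableSpace E] [BorelSpace E]

theorem MeasureTheory.MemLp.fourier_toLp_ae_eq {h : E → ℂ} (h2 : MemLp h 2) (h1 : Integrable h) :
    (𝓕 h2.toLp : Lp ℂ 2 (volume : Measure E)) =ᵐ[volume] 𝓕 h := by
  set F : Lp ℂ 2 (volume : Measure E) := 𝓕 h2.toLp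
  have hcont : Continuous (𝓕 h) := VectorFourier.fourierIntegral_continuous
    Real.continuous_fourierChar (innerSL ℝ).continuous₂ h1
  have hloc : LocallyIntegrable (fun x => F x - 𝓕 h x) volume :=
    ((Lp.memLp F).locallyIntegrable (by norm_num)).sub hcont.locallyIntegrable
  refine (ae_eq_zero_of_integral_contDiff_smul_eq_zero hloc ?_).mono fun x hx => sub_eq_zero.mp hx
  intro g hg hgc
  have hg₁ : HasCompactSupport (Complex.ofRealCLM ∘ g) := hgc.comp_left rfl
  have hg₂ : ContDiff ℝ ∞ (Complex.ofRealCLM ∘ g) := by fun_prop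
  set ψ := hg₁.toSchwartzMap hg₂
  have pairing : ∫ x, ψ x • F x = ∫ x, ψ x • 𝓕 h x :=
    calc ∫ x, ψ x • F x
        = (𝓕 ((h2.toLp : Lp ℂ 2 (volume : Measure E)) : 𝓢'(E, ℂ))) ψ := by
          rw [Lp.fourier_toTemperedDistribution_eq, Lp.toTemperedDistribution_apply]
      _ = ∫ x, 𝓕 ψ x • (h2.toLp : Lp ℂ 2 (volume : Measure E)) x := by
          rw [TemperedDistribution.fourier_apply, Lp.toTemperedDistribution_apply]
      _ = ∫ x, 𝓕 ψ x • h x :=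
          integral_congr_ae (h2.coeFn_toLp.mono fun x hx => by simp only [hx])
      _ = ∫ x, ψ x • 𝓕 h x := by
          have := VectorFourier.integral_fourierIntegral_smul_eq_flip (L := innerₗ E)
            Real.continuous_fourierChar continuous_inner (ψ.integrable (μ := volume)) h1
          rwa [flip_innerₗ] at this
  have hψ : ∀ x, g x • (F x - 𝓕 h x) = ψ x • F x - ψ x • 𝓕 h x := fun x => by
    simp [ψ, smul_sub, Complex.real_smul]
  simp only [hψ]
  rw [integral_sub, pairing, sub_self]
  · exact ((Lp.memLp F).locallyIntegrable (by norm_num)).integrable_smul_left_of_hasCompactSupport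
      ψ.continuous hg₁
  · exact hcont.locallyIntegrable.integrable_smul_left_of_hasCompactSupport ψ.continuous hg₁

theorem MeasureTheory.MemLp.lintegral_enorm_fourier_sq {h : E → ℂ} (h2 : MemLp h 2)
    (h1 : Integrable h) : ∫⁻ ξ, ‖𝓕 h ξ‖ₑ ^ 2 = ∫⁻ x, ‖h x‖ₑ ^ 2 := by
  have hnorm : eLpNorm (𝓕 h) 2 volume = eLpNorm h 2 volume := by
    rw [← eLpNorm_congr_ae (h2.fourier_toLp_ae_eq h1), ← eLpNorm_congr_ae h2.coeFn_toLp,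
      ← ENNReal.toReal_eq_toReal_iff' (Lp.eLpNorm_ne_top _) (Lp.eLpNorm_ne_top _),
      ← Lp.norm_def, ← Lp.norm_def, Lp.norm_fourier_eq]
  have hpow (g : E → ℂ) : eLpNorm g 2 volume ^ 2 = ∫⁻ x, ‖g x‖ₑ ^ 2 := by
    simpa using eLpNorm_nnreal_pow_eq_lintegral (f := g) (μ := volume) (p := 2) two_ne_zero
  rw [← hpow, ← hpow, hnorm]

end Plancherel

section DotFourier

variable {ι : Type*} [Fintype ι]

noncomputable def dotFourier (h : (ι → ℝ) → ℂ) (v : ι → ℝ) : ℂ :=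
  ∫ b, Complex.exp (Complex.I * ↑(∑ j, v j * b j)) * h b

theorem dotFourier_eq_fourier (h : (ι → ℝ) → ℂ) (v : ι → ℝ) :
    dotFourier h v =
      𝓕 (h ∘ WithLp.ofLp : EuclideanSpace ℝ ι → ℂ) (WithLp.toLp 2 (-(2 * π)⁻¹ • v)) := by
  rw [Real.fourier_eq', ← (PiLp.volume_preserving_toLp ι).integral_comp
    (MeasurableEquiv.toLp 2 (ι → ℝ)).measurableEmbedding]
  unfold dotFourier
  congr 1 with b
  rw [smul_eq_mul, Function.comp_apply]
  congr 2
  simp only [EuclideanSpace.inner_eq_star_dotProduct, dotProduct, star_trivial, Pi.smul_apply,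
    smul_eq_mul, Finset.mul_sum, Complex.ofReal_sum, Finset.sum_mul]
  refine Finset.sum_congr rfl fun j _ => ?_
  push_cast
  field_simp

theorem MeasureTheory.MemLp.lintegral_enorm_dotFourier_sq {h : (ι → ℝ) → ℂ} (h2 : MemLp h 2)
    (h1 : Integrable h) :
    ∫⁻ v, ‖dotFourier h v‖ₑ ^ 2 =
      ENNReal.ofReal ((2 * π) ^ Fintype.card ι) * ∫⁻ b, ‖h b‖ₑ ^ 2 := by
  set H : EuclideanSpace ℝ ι → ℂ := h ∘ WithLp.ofLp
  have hof := PiLp.volume_preserving_ofLp ι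
  have hof_emb := (MeasurableEquiv.toLp 2 (ι → ℝ)).symm.measurableEmbedding
  have hR : (-(2 * π)⁻¹ : ℝ) ≠ 0 := by simp [Real.pi_ne_zero]
  have hscale : |((-(2 * π)⁻¹) ^ finrank ℝ (ι → ℝ))⁻¹| = (2 * π) ^ Fintype.card ι := by
    rw [Module.finrank_fintype_fun_eq_card, abs_inv, abs_pow, abs_neg, abs_inv,
      abs_of_pos Real.two_pi_pos, inv_pow, inv_inv]
  calc ∫⁻ v, ‖dotFourier h v‖ₑ ^ 2
      = ∫⁻ v, ‖𝓕 H (WithLp.toLp 2 (-(2 * π)⁻¹ • v))‖ₑ ^ 2 := by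
        simp only [dotFourier_eq_fourier, H]
    _ = ENNReal.ofReal ((2 * π) ^ Fintype.card ι) * ∫⁻ w, ‖𝓕 H (WithLp.toLp 2 w)‖ₑ ^ 2 := by
        rw [lintegral_comp_smul volume (fun w => ‖𝓕 H (WithLp.toLp 2 w)‖ₑ ^ 2) hR, hscale]
    _ = ENNReal.ofReal ((2 * π) ^ Fintype.card ι) * ∫⁻ x, ‖H x‖ₑ ^ 2 := by
        rw [(PiLp.volume_preserving_toLp ι).lintegral_comp_emb
            (MeasurableEquiv.toLp 2 (ι → ℝ)).measurableEmbedding (fun x => ‖𝓕 H x‖ₑ ^ 2),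
          (h2.comp_measurePreserving hof).lintegral_enorm_fourier_sq
            ((hof.integrable_comp_emb hof_emb).mpr h1)]
    _ = ENNReal.ofReal ((2 * π) ^ Fintype.card ι) * ∫⁻ b, ‖h b‖ₑ ^ 2 :=
        congrArg _ (hof.lintegral_comp_emb hof_emb (fun b => ‖h b‖ₑ ^ 2))

end DotFourier

section PartialFourier

variable {p : ℕ} {f : ℝ × (Fin p → ℝ) → ℂ} {t : ℝ}

theorem integrable_partialFourierFst (hf : Integrable f) :
    Integrable (partialFourierFst p f t) := by
  have hint := hf.cexp_I_mul_mul (φ := fun q => t * q.1) (by fun_prop)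
  rw [Measure.volume_eq_prod] at hint
  exact hint.integral_prod_right

theorem paperFourier_eq_dotFourier (hf : Integrable f) :
    paperFourier p f t = dotFourier (partialFourierFst p f t) := by
  ext v
  have hint := hf.cexp_I_mul_mul (φ := fun q => t * q.1 + ∑ j, v j * q.2 j) (by fun_prop)
  rw [Measure.volume_eq_prod] at hint
  rw [paperFourier, Measure.volume_eq_prod, integral_prod_symm _ hint]
  refine integral_congr_ae (.of_forall fun b => ?_)
  dsimp only [partialFourierFst]
  rw [← integral_const_mul]
  congr 1 with a
  rw [Complex.ofReal_add, mul_add, Complex.exp_add]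
  ring

end PartialFourier

/-- The key change-of-variables/Plancherel bound (eq. P3 of the paper):
`∫_{[-1,1]^p} |𝓕[f](t, x₀ t u)|² du ≤ (2π/(x₀|t|))^p ∫_{ℝ^p} |𝓕₁f(t,b)|² db`. -/
theorem fourier_cone_slice_bound
    (p : ℕ) (x₀ t : ℝ) (hx₀ : 0 < x₀) (ht : t ≠ 0)
    (f : ℝ × (Fin p → ℝ) → ℂ) (hfi : Integrable f volume)
    (hL2 : (∫⁻ b : Fin p → ℝ, (‖partialFourierFst p f t b‖₊ : ℝ≥0∞) ^ 2) < ⊤) :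
    (∫⁻ u in Set.pi Set.univ (fun _ : Fin p => Set.Icc (-1 : ℝ) 1),
        (‖paperFourier p f t ((x₀ * t) • u)‖₊ : ℝ≥0∞) ^ 2) ≤
      ENNReal.ofReal ((2 * Real.pi / (x₀ * |t|)) ^ p) *
        ∫⁻ b : Fin p → ℝ, (‖partialFourierFst p f t b‖₊ : ℝ≥0∞) ^ 2 := by
  simp only [← enorm_eq_nnnorm] at hL2 ⊢
  have hc : x₀ * t ≠ 0 := mul_ne_zero hx₀.ne' ht
  have h1 := integrable_partialFourierFst (t := t) hfi
  have h2 : MemLp (partialFourierFst p f t) 2 :=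
    ⟨h1.aestronglyMeasurable, (eLpNorm_lt_top_iff_lintegral_rpow_enorm_lt_top two_ne_zero
      ENNReal.ofNat_ne_top).mpr (by simpa using hL2)⟩
  have hconst : |((x₀ * t) ^ finrank ℝ (Fin p → ℝ))⁻¹| * (2 * π) ^ p =
      (2 * π / (x₀ * |t|)) ^ p := by
    rw [Module.finrank_fin_fun, abs_inv, abs_pow, abs_mul, abs_of_pos hx₀, inv_mul_eq_div,
      div_pow]
  calc ∫⁻ u in Set.pi Set.univ (fun _ : Fin p => Set.Icc (-1 : ℝ) 1),
        ‖paperFourier p f t ((x₀ * t) • u)‖ₑ ^ 2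
      ≤ ∫⁻ u, ‖paperFourier p f t ((x₀ * t) • u)‖ₑ ^ 2 := setLIntegral_le_lintegral _ _
    _ = ENNReal.ofReal |((x₀ * t) ^ finrank ℝ (Fin p → ℝ))⁻¹| *
          ∫⁻ v, ‖paperFourier p f t v‖ₑ ^ 2 :=
        lintegral_comp_smul volume (fun v => ‖paperFourier p f t v‖ₑ ^ 2) hc
    _ = ENNReal.ofReal ((2 * π / (x₀ * |t|)) ^ p) *
          ∫⁻ b, ‖partialFourierFst p f t b‖ₑ ^ 2 := by
        rw [paperFourier_eq_dotFourier hfi, h2.lintegral_enorm_dotFourier_sq h1, ← mul_assoc,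
          ← ENNReal.ofReal_mul (abs_nonneg _), Fintype.card_fin, hconst]
end

section
/- Let p ∈ ℕ. Let (α,β) be an ℝ^{1+p}-valued random vector with (Lebesgue) density f, and let X be an ℝ^p-valued random vector, defined on the same probability space and independent of (α,β). Set Y = α + βᵀX. Then for every t ∈ ℝ, almost surely, E[e^{itY} | X] = 𝓕[f](t, tX), where 𝓕[f](t,v) = ∫_{ℝ^{1+p}} e^{i(t a + v·b)} f(a,b) da db. -/
open MeasureTheory Set
open scoped ENNReal

/-!
Conditionally on `X = x`, the coefficients `(α, β)` keep their law (independence), so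
`E[e^{itY} | X = x]` is the integral of `e^{it(a + b·x)}` against `f(a, b) da db`,
which is `𝓕[f](t, tx)` after writing `t(a + b·x) = ta + (tx)·b`.
-/

namespace ProbabilityTheory

variable {Ω β γ : Type*} [MeasurableSpace Ω] {μ : Measure Ω} [IsFiniteMeasure μ]
  [MeasurableSpace β] [MeasurableSpace γ] [StandardBorelSpace γ] [Nonempty γ]
  {X : Ω → β} {Y : Ω → γ}

lemma IndepFun.condDistrib_ae_eq_const (hXY : IndepFun Y X μ)
    (hX : AEMeasurable X μ) (hY : AEMeasurable Y μ) :
    condDistrib Y X μ =ᵐ[μ.map X] Kernel.const β (μ.map Y) := by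
  refine condDistrib_ae_eq_of_measure_eq_compProd X hY ?_
  rw [Measure.compProd_const]
  exact (indepFun_iff_map_prod_eq_prod_map_map hX hY).mp hXY.symm

lemma IndepFun.condExp_comp_prod_ae_eq_integral_map {F : Type*} [NormedAddCommGroup F]
    [NormedSpace ℝ F] [CompleteSpace F] (hXY : IndepFun Y X μ)
    (hX : Measurable X) (hY : AEMeasurable Y μ) {g : β × γ → F} (hg : StronglyMeasurable g)
    (hg_int : Integrable (fun ω => g (X ω, Y ω)) μ) :
    μ[fun ω => g (X ω, Y ω) | MeasurableSpace.comap X inferInstance]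
      =ᵐ[μ] fun ω => ∫ y, g (X ω, y) ∂(μ.map Y) := by
  filter_upwards [condExp_prod_ae_eq_integral_condDistrib hX hY hg hg_int,
    ae_of_ae_map hX.aemeasurable (hXY.condDistrib_ae_eq_const hX.aemeasurable hY)]
    with ω hω hκ
  rw [hω, hκ, Kernel.const_apply]

end ProbabilityTheory

lemma MeasureTheory.integral_withDensity_ofReal {α E : Type*} [MeasurableSpace α]
    [NormedAddCommGroup E] [NormedSpace ℝ E] {μ : Measure α} {f : α → ℝ}
    (hf : Measurable f) (hf0 : 0 ≤ᵐ[μ] f) (g : α → E) :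
    ∫ x, g x ∂μ.withDensity (fun x => ENNReal.ofReal (f x)) = ∫ x, f x • g x ∂μ := by
  rw [integral_withDensity_eq_integral_toReal_smul hf.ennreal_ofReal
    (ae_of_all _ fun _ => ENNReal.ofReal_lt_top)]
  refine integral_congr_ae ?_
  filter_upwards [hf0] with x hx
  rw [ENNReal.toReal_ofReal hx]

lemma mul_add_sum_mul_eq {p : ℕ} (t a : ℝ) (b x : Fin p → ℝ) :
    t * (a + ∑ j, b j * x j) = t * a + ∑ j, (t • x) j * b j := by
  simp only [mul_add, Finset.mul_sum, Pi.smul_apply, smul_eq_mul]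
  congr 1
  exact Finset.sum_congr rfl fun j _ => by ring

/-- The identification identity of the random coefficients model: if `(α,β)` has density `f`,
is independent of `X`, and `Y = α + βᵀX`, then for every `t`, almost surely
`E[e^{itY} | X] = 𝓕[f](t, tX)`. -/
theorem condexp_char_fun_eq_fourier_of_indep
    {Ω : Type*} [MeasurableSpace Ω] (μ : Measure Ω) [IsProbabilityMeasure μ]
    (p : ℕ) (A : Ω → ℝ) (B : Ω → Fin p → ℝ) (X : Ω → Fin p → ℝ)
    (hA : Measurable A) (hB : Measurable B) (hX : Measurable X)
    (hindep : ProbabilityTheory.IndepFun (fun ω => (A ω, B ω)) X μ)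
    (f : ℝ × (Fin p → ℝ) → ℝ) (hfm : Measurable f) (hf0 : ∀ q, 0 ≤ f q)
    (hdens : Measure.map (fun ω => (A ω, B ω)) μ =
      volume.withDensity fun q => ENNReal.ofReal (f q))
    (t : ℝ) :
    μ[fun ω => Complex.exp (Complex.I * ((t * (A ω + ∑ j, B ω j * X ω j) : ℝ) : ℂ)) |
        MeasurableSpace.comap X inferInstance] =ᵐ[μ]
      fun ω => paperFourier p (fun q => (f q : ℂ)) t (t • X ω) := by
  set g : (Fin p → ℝ) × (ℝ × (Fin p → ℝ)) → ℂ := fun z =>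
    Complex.exp (Complex.I * ((t * (z.2.1 + ∑ j, z.2.2 j * z.1 j) : ℝ) : ℂ))
  have hg : Continuous g := by fun_prop
  have hg_int : Integrable (fun ω => g (X ω, (A ω, B ω))) μ :=
    .of_bound (by fun_prop) 1 (ae_of_all _ fun _ => (Complex.norm_exp_I_mul_ofReal _).le)
  refine (hindep.condExp_comp_prod_ae_eq_integral_map hX (by fun_prop)
    hg.stronglyMeasurable hg_int).trans (ae_of_all _ fun ω => ?_)
  dsimp only
  rw [hdens, integral_withDensity_ofReal hfm (ae_of_all _ hf0), paperFourier]
  refine integral_congr_ae (ae_of_all _ fun q => ?_)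
  simp only [g, mul_add_sum_mul_eq, Complex.real_smul]
  exact mul_comm _ _
end
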